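/- Let I and J be finite common independent sets of M and N with I ∼ J. Then for all x, y ∈ E there is an xy-augmenting path for I if and only if there is an xy-augmenting path for J; furthermore, if P is an xy-augmenting path for I and Q is an xy-augmenting path for J, then I △ P ∼ J △ Q. -/

import Mathlib

open Set Matroid
open scoped symmDiff

namespace AZ

variable {α : Type*}

/-- The contraction `M / X`, defined (in the standard way) as the dual of the
restriction of the dual to the complement of `X`. -/
def con (M : Matroid α) (X : Set α) : Matroid α := (M✶ ↾ (M.E \ X))✶

/-- The deletion `M − X := M ↾ (E ∖ X)`. -/
def del (M : Matroid α) (X : Set α) : Matroid α := M ↾ (M.E \ X)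

/-- The matroidal Hall condition `Hall(M,N)`: for every `X ⊆ E` such that `M ↾ X` has a
base that is independent in `N.X = N/(E∖X)`, also `N.X` has a base independent in `M ↾ X`. -/
def Hall (M N : Matroid α) : Prop :=
  ∀ X ⊆ N.E,
    (∃ B, (M ↾ X).IsBase B ∧ (con N (N.E \ X)).Indep B) →
    ∃ B, (con N (N.E \ X)).IsBase B ∧ (M ↾ X).Indep B

/-- `(M,N)` is finitely matchable: every finite `F ⊆ E` is `N`-spanned by an
`M`-independent set. -/
def FinitelyMatchable (M N : Matroid α) : Prop :=
  ∀ F ⊆ M.E, F.Finite → ∃ I, M.Indep I ∧ F ⊆ N.closure I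

/-- `G ⊆ E` is `(M,N)`-negligible: for all finite `X ⊆ G` and finite `Y ⊆ E ∖ G` there
is an `M/Y`-independent set that `N`-spans `X`. -/
def Negligible (M N : Matroid α) (G : Set α) : Prop :=
  G ⊆ M.E ∧
    ∀ X ⊆ G, X.Finite → ∀ Y ⊆ M.E \ G, Y.Finite →
      ∃ I, (con M Y).Indep I ∧ X ⊆ N.closure I

/-- A common independent set `I` of `M` and `N` is `(M,N)`-stable if every `J ⊆ E ∖ I`
that is independent in `M/I` and in `N` is also independent in `N/I`. -/
def Stable (M N : Matroid α) (I : Set α) : Prop :=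
  M.Indep I ∧ N.Indep I ∧
    ∀ J ⊆ M.E \ I, (con M I).Indep J → N.Indep J → (con N I).Indep J

/-- A circuit of a matroid: a minimal dependent subset of the ground set. -/
def Circuit (M : Matroid α) (C : Set α) : Prop :=
  C ⊆ M.E ∧ ¬ M.Indep C ∧ ∀ D ⊂ C, M.Indep D

/-- The arc relation of the exchange digraph `D(I)`: for `x ∈ E ∖ I` and `y ∈ I` there is
an arc `x → y` if `x ∈ span_M(I)` and `y` lies in the unique `M`-circuit contained in
`I + x`, and an arc `y → x` if `x ∈ span_N(I)` and `y` lies in the unique `N`-circuit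
contained in `I + x`. -/
def Arc (M N : Matroid α) (I : Set α) (x y : α) : Prop :=
  (x ∈ M.E \ I ∧ y ∈ I ∧ x ∈ M.closure I ∧
    ∃ C, Circuit M C ∧ C ⊆ insert x I ∧ x ∈ C ∧ y ∈ C) ∨
  (x ∈ I ∧ y ∈ M.E \ I ∧ y ∈ N.closure I ∧
    ∃ C, Circuit N C ∧ C ⊆ insert y I ∧ y ∈ C ∧ x ∈ C)

/-- `Reach M N I x` is `E(x,I)`: the set of elements reachable from `x` by a directed
path in `D(I)`. -/
def Reach (M N : Matroid α) (I : Set α) (x : α) : Set α :=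
  {y | Relation.ReflTransGen (Arc M N I) x y}

/-- `P = {f 0, …, f (2n)}` is an `xy`-augmenting path for `I`: it starts at
`x = f 0 ∉ span_N(I)`, ends at `y = f (2n) ∉ span_M(I)`, consecutive elements are joined
by arcs of `D(I)`, and there are no jumping arcs. -/
def IsAugPath (M N : Matroid α) (I P : Set α) (x y : α) : Prop :=
  ∃ (n : ℕ) (f : ℕ → α),
    P = f '' Set.Iic (2 * n) ∧ P ⊆ M.E ∧ Set.InjOn f (Set.Iic (2 * n)) ∧
    f 0 = x ∧ f (2 * n) = y ∧
    x ∉ N.closure I ∧ y ∉ M.closure I ∧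
    (∀ i < 2 * n, Arc M N I (f i) (f (i + 1))) ∧
    (∀ i j, i + 1 < j → j ≤ 2 * n → ¬ Arc M N I (f i) (f j))

/-- One augmentation step: `J = I △ P` for some augmenting path `P` for `I`. -/
def AugStep (M N : Matroid α) (I J : Set α) : Prop :=
  ∃ P x y, IsAugPath M N I P x y ∧ J = I ∆ P

/-- `J ∈ A(I)`: `J` is obtained from `I` by finitely many successive augmentations. -/
def MemA (M N : Matroid α) (I J : Set α) : Prop :=
  Relation.ReflTransGen (AugStep M N) I J

/-- `O = {f 0, …, f (2n+1)}` is a switching cycle for `I`: the arcs of `D(I)` inside `O`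
are exactly the arcs `f i → f (i+1 mod 2n+2)`, forming a chordless directed cycle. -/
def SwitchCycle (M N : Matroid α) (I O : Set α) : Prop :=
  ∃ (n : ℕ) (f : ℕ → α),
    O = f '' Set.Iio (2 * n + 2) ∧ O ⊆ M.E ∧ Set.InjOn f (Set.Iio (2 * n + 2)) ∧
    ∀ i < 2 * n + 2, ∀ j < 2 * n + 2,
      (Arc M N I (f i) (f j) ↔ j = (i + 1) % (2 * n + 2))

/-- The preorder on finite common independent sets: `I ⊴ J` iff
`I ⊆ span_M(J) ∩ span_N(J)`. -/
def Le (M N : Matroid α) (I J : Set α) : Prop :=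
  I ⊆ M.closure J ∩ N.closure J

/-- The equivalence relation: `I ∼ J` iff `I ⊴ J` and `J ⊴ I`. -/
def Sim (M N : Matroid α) (I J : Set α) : Prop :=
  Le M N I J ∧ Le M N J I

/-- A family of finite common independent sets of `M` and `N` that is closed under `∼`
and is `⊴`-directed. -/
def DirFam (M N : Matroid α) (D : Set (Set α)) : Prop :=
  (∀ I ∈ D, I.Finite ∧ M.Indep I ∧ N.Indep I) ∧
  (∀ I ∈ D, ∀ J, J.Finite → M.Indep J → N.Indep J → Sim M N I J → J ∈ D) ∧
  (∀ I ∈ D, ∀ J ∈ D, ∃ K ∈ D, Le M N I K ∧ Le M N J K)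

/-- A maximal directed family of finite common independent sets. -/
def MaxDirFam (M N : Matroid α) (D : Set (Set α)) : Prop :=
  DirFam M N D ∧ ∀ D', DirFam M N D' → D ⊆ D' → D' = D

/-!
Since `I ∼ J`, the sets `I` and `J` have the same `M`-span and the same `N`-span. Augmenting along
an `xy`-path `P` yields a common independent set `I △ P` with `span_M (I △ P) = span_M (I + y)` and
`span_N (I △ P) = span_N (I + x)`: the absence of chords makes the exchanges along `P` triangular,
in `M` along `P` and in `N` along `P` reversed. This gives the second claim. For the first,
`K = I △ P` forces `y` to be reachable from `x` in `D(J)` by a counting argument, and a shortest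
`xy`-walk in `D(J)` is an augmenting path for `J`.
-/

end AZ

namespace Matroid

variable {α ι : Type*} {M : Matroid α} {I : Set α} {e f : α}

theorem Indep.exchange_fundCircuit (hI : M.Indep I) (he : e ∈ M.closure I \ I)
    (hf : f ∈ I ∩ M.fundCircuit e I) :
    M.Indep (insert e I \ {f}) ∧ M.closure (insert e I \ {f}) = M.closure I := by
  have hindep := (hI.mem_fundCircuit_iff he.1 he.2).1 hf.2
  refine ⟨hindep, (M.closure_subset_closure_of_subset_closure ?_).antisymm
    (M.closure_subset_closure_of_subset_closure fun w hw ↦ ?_)⟩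
  · exact sdiff_subset.trans (insert_subset he.1 (M.subset_closure I hI.subset_ground))
  obtain rfl | hwf := eq_or_ne w f
  · exact M.closure_subset_closure (sdiff_subset_sdiff_left (M.fundCircuit_subset_insert e I))
      ((hI.fundCircuit_isCircuit he.1 he.2).mem_closure_sdiff_singleton_of_mem hf.2)
  · exact M.subset_closure _ hindep.subset_ground ⟨mem_insert_of_mem e hw, hwf⟩

/-- Exchange the largest index first: this does not disturb the fundamental circuits of the
others. -/
theorem Indep.exchange_triangular [LinearOrder ι] (hI : M.Indep I) (s : Finset ι) (z a : ι → α)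
    (hz : ∀ i ∈ s, z i ∈ M.closure I \ I) (ha : ∀ i ∈ s, a i ∈ I ∩ M.fundCircuit (z i) I)
    (htri : ∀ i ∈ s, ∀ j ∈ s, i < j → a j ∉ M.fundCircuit (z i) I) :
    M.Indep (I \ a '' s ∪ z '' s) ∧ M.closure (I \ a '' s ∪ z '' s) = M.closure I := by
  classical
  induction s using Finset.induction_on_max generalizing I with
  | empty => simpa using hI
  | insert m t hmax ih =>
    simp only [Finset.mem_insert, forall_eq_or_imp] at hz ha htri
    obtain ⟨hI', hcl'⟩ := hI.exchange_fundCircuit hz.1 ha.1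
    have hz_ne : ∀ i ∈ t, z i ≠ z m := fun i hi h ↦
      htri.2 i hi |>.1 (hmax i hi) (h ▸ ha.1.2)
    have ha_ne : ∀ i ∈ t, a i ≠ a m := fun i hi h ↦
      htri.2 i hi |>.1 (hmax i hi) (h ▸ (ha.2 i hi).2)
    have hC_eq : ∀ i ∈ t,
        M.fundCircuit (z i) (insert (z m) I \ {a m}) = M.fundCircuit (z i) I := by
      refine fun i hi ↦ ((hI.fundCircuit_isCircuit (hz.2 i hi).1 (hz.2 i hi).2)
        |>.eq_fundCircuit_of_subset hI' fun w hw ↦ ?_).symm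
      obtain rfl | hwI := M.fundCircuit_subset_insert _ _ hw
      · exact mem_insert _ _
      · exact mem_insert_of_mem _ ⟨mem_insert_of_mem _ hwI,
          fun h ↦ (htri.2 i hi).1 (hmax i hi) ((eq_of_mem_singleton h) ▸ hw)⟩
    obtain ⟨hindep, hcl⟩ := ih hI'
      (fun i hi ↦ ⟨hcl' ▸ (hz.2 i hi).1, by simp [hz_ne i hi, (hz.2 i hi).2]⟩)
      (fun i hi ↦ ⟨⟨mem_insert_of_mem _ (ha.2 i hi).1, ha_ne i hi⟩, hC_eq i hi ▸ (ha.2 i hi).2⟩)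
      (fun i hi j hj hij ↦ hC_eq i hi ▸ (htri.2 i hi).2 j hj hij)
    have hset : (insert (z m) I \ {a m}) \ a '' (t : Set ι) ∪ z '' (t : Set ι)
        = I \ a '' ↑(insert m t) ∪ z '' ↑(insert m t) := by
      have hzm : z m ∉ I := hz.1.2
      have hat : ∀ j ∈ t, a j ∈ I := fun j hj ↦ (ha.2 j hj).1
      ext w
      simp only [Finset.coe_insert, image_insert_eq, mem_union, mem_sdiff, mem_insert_iff,
        mem_singleton_iff, mem_image, Finset.mem_coe]
      grind
    rw [← hset]
    exact ⟨hindep, hcl.trans hcl'⟩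

theorem Indep.encard_le_of_subset_closure {X : Set α} (hI : M.Indep I) (h : I ⊆ M.closure X) :
    I.encard ≤ X.encard :=
  (hI.encard_le_eRk_of_subset h).trans ((M.eRk_closure_eq X).trans_le (M.eRk_le_encard X))

end Matroid

namespace Relation

variable {α : Type*} {r : α → α → Prop} {f : ℕ → α} {n : ℕ}

def IsWalk (r : α → α → Prop) (f : ℕ → α) (n : ℕ) : Prop :=
  ∀ i < n, r (f i) (f (i + 1))

theorem ReflTransGen.exists_isWalk {x y : α} (h : ReflTransGen r x y) :
    ∃ n f, f 0 = x ∧ f n = y ∧ IsWalk r f n := by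
  induction h with
  | refl => exact ⟨0, fun _ ↦ x, rfl, rfl, fun i hi ↦ absurd hi (Nat.not_lt_zero i)⟩
  | @tail b c _ hbc ih =>
    obtain ⟨n, f, hf0, hfn, hf⟩ := ih
    refine ⟨n + 1, fun k ↦ if k ≤ n then f k else c, by simpa using hf0, by simp, ?_⟩
    intro i hi
    rcases Nat.lt_succ_iff_lt_or_eq.1 hi with hi | rfl
    · simpa [hi.le, Nat.succ_le_of_lt hi] using hf i hi
    · simpa [hfn] using hbc

theorem IsWalk.shortcut (hf : IsWalk r f n) {i j : ℕ} (hij : i + 1 < j) (hjn : j ≤ n)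
    (h : r (f i) (f j)) :
    ∃ g, g 0 = f 0 ∧ g (n - (j - i - 1)) = f n ∧ IsWalk r g (n - (j - i - 1)) := by
  refine ⟨fun k ↦ if k ≤ i then f k else f (k + (j - i - 1)), by simp, ?_, fun k hk ↦ ?_⟩
  · simp only [show ¬ n - (j - i - 1) ≤ i by omega, if_false]
    congr 1; omega
  · rcases lt_trichotomy k i with hki | rfl | hki
    · simpa [hki.le, Nat.succ_le_of_lt hki] using hf k (by omega)
    · simpa [show k + 1 + (j - k - 1) = j by omega] using h
    · simpa [show ¬ k ≤ i by omega, show ¬ k + 1 ≤ i by omega,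
        show k + 1 + (j - i - 1) = k + (j - i - 1) + 1 by omega] using hf _ (by omega)

theorem ReflTransGen.exists_chordless_isWalk {x y : α} (h : ReflTransGen r x y) :
    ∃ n f, f 0 = x ∧ f n = y ∧ IsWalk r f n ∧ ∀ i j, i + 1 < j → j ≤ n → ¬ r (f i) (f j) := by
  classical
  have hex : ∃ n f, f 0 = x ∧ f n = y ∧ IsWalk r f n := h.exists_isWalk
  obtain ⟨f, hf0, hfn, hf⟩ := Nat.find_spec hex
  refine ⟨_, f, hf0, hfn, hf, fun i j hij hjn hr ↦ ?_⟩
  obtain ⟨g, hg0, hgn, hg⟩ := hf.shortcut hij hjn hr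
  exact Nat.find_min hex (show Nat.find hex - (j - i - 1) < Nat.find hex by omega)
    ⟨g, hg0.trans hf0, hgn.trans hfn, hg⟩

end Relation

namespace AZ

open Relation

variable {α : Type*} {M N : Matroid α} {I J K P : Set α} {u v x y z : α}

theorem circuit_iff_isCircuit {C : Set α} : Circuit M C ↔ M.IsCircuit C := by
  rw [isCircuit_iff_forall_ssubset, Matroid.Dep, Circuit]
  tauto

theorem exists_circuit_iff_mem_fundCircuit (hI : M.Indep I) (hu : u ∈ M.closure I \ I) :
    (∃ C, Circuit M C ∧ C ⊆ insert u I ∧ u ∈ C ∧ v ∈ C) ↔ v ∈ M.fundCircuit u I := by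
  simp_rw [circuit_iff_isCircuit]
  constructor
  · rintro ⟨C, hC, hCI, -, hvC⟩
    rwa [← hC.eq_fundCircuit_of_subset hI hCI]
  · exact fun hv ↦ ⟨_, hI.fundCircuit_isCircuit hu.1 hu.2, M.fundCircuit_subset_insert u I,
      M.mem_fundCircuit u I, hv⟩

theorem arc_iff_of_notMem (hI : M.Indep I) (hu : u ∉ I) :
    Arc M N I u v ↔ u ∈ M.closure I ∧ v ∈ I ∩ M.fundCircuit u I := by
  constructor
  · rintro (⟨-, hv, hcl, hC⟩ | ⟨hu', -⟩)
    · exact ⟨hcl, hv, (exists_circuit_iff_mem_fundCircuit hI ⟨hcl, hu⟩).1 hC⟩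
    · exact absurd hu' hu
  · rintro ⟨hcl, hv, hvC⟩
    exact Or.inl ⟨⟨M.mem_ground_of_mem_closure hcl, hu⟩, hv, hcl,
      (exists_circuit_iff_mem_fundCircuit hI ⟨hcl, hu⟩).2 hvC⟩

theorem arc_swap (hE : M.E = N.E) : Arc M N I u v ↔ Arc N M I v u := by
  unfold Arc
  rw [hE]
  exact or_comm.trans (or_congr and_left_comm and_left_comm)

theorem Arc.mem_iff_notMem (h : Arc M N I u v) : u ∈ I ↔ v ∉ I := by
  rcases h with ⟨hu, hv, -⟩ | ⟨hu, hv, -⟩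
  · exact iff_of_false hu.2 (not_not.2 hv)
  · exact iff_of_true hu hv.2

theorem Arc.mem_ground (h : Arc M N I u v) (hI : I ⊆ M.E) : u ∈ M.E ∧ v ∈ M.E := by
  rcases h with ⟨hu, hv, -⟩ | ⟨hu, hv, -⟩
  · exact ⟨hu.1, hI hv⟩
  · exact ⟨hI hu, hv.1⟩

theorem Arc.mem_closure (h : Arc M N I u v) (hI : I ⊆ M.E) : u ∈ M.closure I := by
  rcases h with ⟨-, -, hu, -⟩ | ⟨hu, -⟩
  · exact hu
  · exact M.subset_closure I hI hu

theorem _root_.Relation.IsWalk.mem_iff_mem_iff {f : ℕ → α} {n : ℕ} (hf : IsWalk (Arc M N I) f n) :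
    ∀ k ≤ n, ((f k ∈ I ↔ f 0 ∈ I) ↔ k % 2 = 0) := by
  intro k hk
  induction k with
  | zero => simp
  | succ k ih =>
    have := (hf k hk).mem_iff_notMem
    have := ih (by omega)
    grind

theorem mem_closure_inter_reach (hJ : M.Indep J) (hz : z ∈ Reach M N J x)
    (hzcl : z ∈ M.closure J) : z ∈ M.closure (J ∩ Reach M N J x) := by
  by_cases hzJ : z ∈ J
  · exact M.subset_closure _ (inter_subset_left.trans hJ.subset_ground) ⟨hzJ, hz⟩
  have hC := hJ.fundCircuit_isCircuit hzcl hzJ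
  have hsub : M.fundCircuit z J \ {z} ⊆ J ∩ Reach M N J x := by
    rintro w ⟨hwC, hwz⟩
    have hwJ : w ∈ J := (M.fundCircuit_subset_insert z J hwC).resolve_left hwz
    exact ⟨hwJ, ReflTransGen.tail hz ((arc_iff_of_notMem hJ hzJ).2 ⟨hzcl, hwJ, hwC⟩)⟩
  exact M.closure_subset_closure hsub
    (hC.mem_closure_sdiff_singleton_of_mem (M.mem_fundCircuit z J))

theorem mem_closure_sdiff_reach (hJ : N.Indep J) (hzE : z ∈ M.E) (hz : z ∉ Reach M N J x)
    (hzcl : z ∈ N.closure J) : z ∈ N.closure (J \ Reach M N J x) := by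
  by_cases hzJ : z ∈ J
  · exact N.subset_closure _ (sdiff_subset.trans hJ.subset_ground) ⟨hzJ, hz⟩
  have hC := hJ.fundCircuit_isCircuit hzcl hzJ
  have hsub : N.fundCircuit z J \ {z} ⊆ J \ Reach M N J x := by
    rintro w ⟨hwC, hwz⟩
    have hwJ : w ∈ J := (N.fundCircuit_subset_insert z J hwC).resolve_left hwz
    refine ⟨hwJ, fun hw ↦ hz (ReflTransGen.tail hw (Or.inr ⟨hwJ, ⟨hzE, hzJ⟩, hzcl, ?_⟩))⟩
    exact (exists_circuit_iff_mem_fundCircuit hJ ⟨hzcl, hzJ⟩).2 hwC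
  exact N.closure_subset_closure hsub
    (hC.mem_closure_sdiff_singleton_of_mem (N.mem_fundCircuit z J))

/-- Otherwise the set `R` reachable from `x` splits `K` into `K ∩ R ⊆ span_M (J ∩ R)` and
`K \ R ⊆ span_N (J \ R)`, forcing `|K| ≤ |J|`, although `K` spans the independent set `J + y`. -/
theorem mem_reach_of_subset_closure (hJM : M.Indep J) (hJfin : J.Finite) (hJN : N.Indep J)
    (hKM : M.Indep K) (hKN : N.Indep K) (hyK : y ∈ K) (hy : y ∉ M.closure J)
    (hKyM : K \ {y} ⊆ M.closure J) (hKxN : K \ {x} ⊆ N.closure J) (hJK : J ⊆ M.closure K) :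
    y ∈ Reach M N J x := by
  by_contra hyR
  set R := Reach M N J x
  have hxR : x ∈ R := ReflTransGen.refl
  have hKR : K ∩ R ⊆ M.closure (J ∩ R) := fun z ⟨hzK, hzR⟩ ↦
    mem_closure_inter_reach hJM hzR (hKyM ⟨hzK, fun h ↦ hyR (eq_of_mem_singleton h ▸ hzR)⟩)
  have hKR' : K \ R ⊆ N.closure (J \ R) := fun z ⟨hzK, hzR⟩ ↦
    mem_closure_sdiff_reach hJN (hKM.subset_ground hzK) hzR
      (hKxN ⟨hzK, fun h ↦ hzR (eq_of_mem_singleton h ▸ hxR)⟩)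
  have hKJ : K.encard ≤ J.encard := calc
    K.encard = (K \ R).encard + (K ∩ R).encard := (encard_sdiff_add_encard_inter K R).symm
    _ ≤ (J \ R).encard + (J ∩ R).encard :=
      add_le_add ((hKN.subset sdiff_subset).encard_le_of_subset_closure hKR')
        ((hKM.subset inter_subset_left).encard_le_of_subset_closure hKR)
    _ = J.encard := encard_sdiff_add_encard_inter J R
  have hyJ : y ∉ J := fun h ↦ hy (M.subset_closure J hJM.subset_ground h)
  have hJK' : J.encard + 1 ≤ K.encard := by
    rw [← encard_insert_of_notMem hyJ]
    refine ((hJM.insert_indep_iff_of_notMem hyJ).2 ⟨hKM.subset_ground hyK, hy⟩)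
      |>.encard_le_of_subset_closure (insert_subset ?_ hJK)
    exact M.subset_closure K hKM.subset_ground hyK
  exact (ENat.add_one_le_iff hJfin.encard_lt_top.ne).1 (hJK'.trans hKJ) |>.ne rfl

theorem exists_isAugPath_of_mem_reach (hJM : M.Indep J) (hJN : N.Indep J) (hxE : x ∈ M.E)
    (hx : x ∉ N.closure J) (hy : y ∉ M.closure J) (h : y ∈ Reach M N J x) :
    ∃ Q, IsAugPath M N J Q x y := by
  obtain ⟨n, f, rfl, rfl, hf, hchord⟩ := ReflTransGen.exists_chordless_isWalk h
  have hxJ : f 0 ∉ J := fun h ↦ hx (N.subset_closure J hJN.subset_ground h)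
  have hyJ : f n ∉ J := fun h ↦ hy (M.subset_closure J hJM.subset_ground h)
  obtain ⟨m, rfl⟩ : ∃ m, n = 2 * m := ⟨n / 2, by have := hf.mem_iff_mem_iff n le_rfl; grind⟩
  have hinj : InjOn f (Iic (2 * m)) := by
    intro i hi j hj hij
    by_contra hne
    wlog hlt : i < j generalizing i j
    · exact this hj hi hij.symm (Ne.symm hne) (by omega)
    obtain hj' | rfl := (mem_Iic.1 hj).lt_or_eq
    · exact hchord i (j + 1) (by omega) hj' (hij ▸ hf j hj')
    · exact hy (hij ▸ (hf i hlt).mem_closure hJM.subset_ground)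
  refine ⟨_, m, f, rfl, ?_, hinj, rfl, rfl, hx, hy, hf, hchord⟩
  rintro _ ⟨k, hk, rfl⟩
  cases k with
  | zero => exact hxE
  | succ k => exact ((hf k (by simp at hk; omega)).mem_ground hJM.subset_ground).2

theorem symmDiff_image_Iic_eq {f : ℕ → α} {n : ℕ}
    (hpar : ∀ k ≤ 2 * n, f k ∈ I ↔ k % 2 = 1) :
    I ∆ (f '' Iic (2 * n)) = insert (f (2 * n))
      (I \ (fun k ↦ f (2 * k + 1)) '' Iio n ∪ (fun k ↦ f (2 * k)) '' Iio n) := by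
  ext w
  simp only [mem_symmDiff, mem_image, mem_Iic, mem_Iio, mem_insert_iff, mem_union, mem_sdiff]
  constructor
  · rintro (⟨hwI, hwP⟩ | ⟨⟨k, hk, rfl⟩, hkI⟩)
    · exact Or.inr (Or.inl ⟨hwI, fun ⟨k, hk, hkw⟩ ↦ hwP ⟨2 * k + 1, by omega, hkw⟩⟩)
    · have hk2 : k % 2 = 0 := by rw [hpar k hk] at hkI; omega
      obtain rfl | hk' := eq_or_ne k (2 * n)
      · exact Or.inl rfl
      · exact Or.inr (Or.inr ⟨k / 2, by omega, by congr 1; omega⟩)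
  · rintro (rfl | ⟨hwI, hwodd⟩ | ⟨k, hk, rfl⟩)
    · exact Or.inr ⟨⟨2 * n, le_rfl, rfl⟩, by rw [hpar _ le_rfl]; omega⟩
    · refine Or.inl ⟨hwI, fun ⟨k, hk, hkw⟩ ↦ ?_⟩
      have hk2 : k % 2 = 1 := (hpar k hk).1 (hkw ▸ hwI)
      exact hwodd ⟨k / 2, by omega, by rw [← hkw]; congr 1; omega⟩
    · exact Or.inr ⟨⟨2 * k, by omega, rfl⟩, by rw [hpar _ (by omega)]; omega⟩

theorem IsAugPath.exchange_left (hI : M.Indep I) (hP : IsAugPath M N I P x y) :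
    M.Indep (I ∆ P) ∧ M.closure (I ∆ P) = M.closure (insert y I) ∧ y ∈ I ∆ P ∧
      I ∆ P \ {y} ⊆ M.closure I := by
  obtain ⟨n, f, rfl, hPE, -, rfl, rfl, -, hy, hf, hchord⟩ := hP
  have hyI : f (2 * n) ∉ I := fun h ↦ hy (M.subset_closure I hI.subset_ground h)
  have hpar : ∀ k ≤ 2 * n, f k ∈ I ↔ k % 2 = 1 := fun k hk ↦ by
    have := IsWalk.mem_iff_mem_iff hf k hk
    have := IsWalk.mem_iff_mem_iff hf _ le_rfl
    grind
  have hstep : ∀ i < n, f (2 * i) ∈ M.closure I \ I ∧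
      f (2 * i + 1) ∈ I ∩ M.fundCircuit (f (2 * i)) I := fun i hi ↦ by
    have hfi : f (2 * i) ∉ I := by rw [hpar _ (by omega)]; omega
    obtain ⟨hcl, hmem⟩ := (arc_iff_of_notMem hI hfi).1 (hf _ (by omega))
    exact ⟨⟨hcl, hfi⟩, hmem⟩
  obtain ⟨hS, hSI⟩ := hI.exchange_triangular (Finset.range n) (fun k ↦ f (2 * k))
    (fun k ↦ f (2 * k + 1)) (fun i hi ↦ (hstep i (Finset.mem_range.1 hi)).1)
    (fun i hi ↦ (hstep i (Finset.mem_range.1 hi)).2) fun i hi j hj hij hC ↦ by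
      obtain ⟨⟨hcl, hfi⟩, -⟩ := hstep i (Finset.mem_range.1 hi)
      exact hchord (2 * i) (2 * j + 1) (by omega) (by simp at hj; omega)
        ((arc_iff_of_notMem hI hfi).2 ⟨hcl, (hstep j (Finset.mem_range.1 hj)).2.1, hC⟩)
  rw [Finset.coe_range] at hS hSI
  rw [symmDiff_image_Iic_eq hpar]
  set S := I \ (fun k ↦ f (2 * k + 1)) '' Iio n ∪ (fun k ↦ f (2 * k)) '' Iio n
  have hyS : f (2 * n) ∉ M.closure S := hSI ▸ hy
  have hyS' : f (2 * n) ∉ S := fun h ↦ hyS (M.subset_closure S hS.subset_ground h)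
  refine ⟨(hS.insert_indep_iff_of_notMem hyS').2 ⟨hPE ⟨2 * n, mem_Iic.2 le_rfl, rfl⟩, hyS⟩,
    closure_insert_congr_right hSI, mem_insert _ _, ?_⟩
  rw [insert_sdiff_self_of_notMem hyS', ← hSI]
  exact M.subset_closure S hS.subset_ground

theorem IsAugPath.swap (hE : M.E = N.E) (hP : IsAugPath M N I P x y) : IsAugPath N M I P y x := by
  obtain ⟨n, f, rfl, hPE, hinj, rfl, rfl, hx, hy, hf, hchord⟩ := hP
  have hrev : (fun k ↦ 2 * n - k) '' Iic (2 * n) = Iic (2 * n) := by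
    ext k
    simp only [mem_image, mem_Iic]
    exact ⟨by rintro ⟨j, -, rfl⟩; omega, fun hk ↦ ⟨2 * n - k, by omega, by omega⟩⟩
  refine ⟨n, fun k ↦ f (2 * n - k), ?_, hE ▸ hPE, fun i hi j hj hij ↦ ?_, by simp, by simp, hy, hx,
    fun i hi ↦ ?_, fun i j hij hj harc ↦ ?_⟩
  · rw [← image_image f (fun k ↦ 2 * n - k), hrev]
  · have := hinj (mem_Iic.2 (Nat.sub_le _ i)) (mem_Iic.2 (Nat.sub_le _ j)) hij
    simp only [mem_Iic] at hi hj
    omega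
  · rw [← arc_swap hE]
    simpa [show 2 * n - (i + 1) + 1 = 2 * n - i by omega] using hf (2 * n - (i + 1)) (by omega)
  · exact hchord (2 * n - j) (2 * n - i) (by omega) (by omega) ((arc_swap hE).2 harc)

theorem IsAugPath.exists_of_closure_eq (hE : M.E = N.E) (hIM : M.Indep I) (hIN : N.Indep I)
    (hJM : M.Indep J) (hJN : N.Indep J) (hJfin : J.Finite) (hclM : M.closure I = M.closure J)
    (hclN : N.closure I = N.closure J) (hP : IsAugPath M N I P x y) :
    ∃ Q, IsAugPath M N J Q x y := by
  obtain ⟨hKM, hKclM, hyK, hKyM⟩ := hP.exchange_left hIM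
  obtain ⟨hKN, -, hxK, hKxN⟩ := (hP.swap hE).exchange_left hIN
  obtain ⟨-, -, -, -, -, -, -, hx, hy, -⟩ := hP
  have hJK : J ⊆ M.closure (I ∆ P) := by
    rw [hKclM]
    exact ((M.subset_closure J hJM.subset_ground).trans hclM.symm.subset).trans
      (M.closure_subset_closure (subset_insert y I))
  rw [hclM] at hy hKyM
  rw [hclN] at hx hKxN
  exact exists_isAugPath_of_mem_reach hJM hJN (hKM.subset_ground hxK) hx hy
    (mem_reach_of_subset_closure hJM hJfin hJN hKM hKN hyK hy hKyM hKxN hJK)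

theorem sim_iff_closure_eq (hIM : I ⊆ M.E) (hIN : I ⊆ N.E) (hJM : J ⊆ M.E) (hJN : J ⊆ N.E) :
    Sim M N I J ↔ M.closure I = M.closure J ∧ N.closure I = N.closure J := by
  simp only [Sim, Le, subset_inter_iff, subset_antisymm_iff,
    M.closure_subset_closure_iff_subset_closure hIM,
    M.closure_subset_closure_iff_subset_closure hJM,
    N.closure_subset_closure_iff_subset_closure hIN,
    N.closure_subset_closure_iff_subset_closure hJN]
  tauto

theorem statement13_general (M N : Matroid α) (hE : M.E = N.E)
    (I J : Set α) (hIfin : I.Finite) (hIM : M.Indep I) (hIN : N.Indep I)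
    (hJfin : J.Finite) (hJM : M.Indep J) (hJN : N.Indep J) (hsim : Sim M N I J) :
    (∀ x y, (∃ P, IsAugPath M N I P x y) ↔ ∃ Q, IsAugPath M N J Q x y) ∧
      ∀ x y P Q, IsAugPath M N I P x y → IsAugPath M N J Q x y →
        Sim M N (I ∆ P) (J ∆ Q) := by
  obtain ⟨hclM, hclN⟩ := (sim_iff_closure_eq hIM.subset_ground hIN.subset_ground
    hJM.subset_ground hJN.subset_ground).1 hsim
  refine ⟨fun x y ↦ ⟨fun ⟨P, hP⟩ ↦ hP.exists_of_closure_eq hE hIM hIN hJM hJN hJfin hclM hclN,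
    fun ⟨Q, hQ⟩ ↦ hQ.exists_of_closure_eq hE hJM hJN hIM hIN hIfin hclM.symm hclN.symm⟩,
    fun x y P Q hP hQ ↦ ?_⟩
  obtain ⟨hPM, hPclM, -⟩ := hP.exchange_left hIM
  obtain ⟨hPN, hPclN, -⟩ := (hP.swap hE).exchange_left hIN
  obtain ⟨hQM, hQclM, -⟩ := hQ.exchange_left hJM
  obtain ⟨hQN, hQclN, -⟩ := (hQ.swap hE).exchange_left hJN
  rw [sim_iff_closure_eq hPM.subset_ground hPN.subset_ground hQM.subset_ground hQN.subset_ground,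
    hPclM, hPclN, hQclM, hQclN]
  exact ⟨closure_insert_congr_right hclM, closure_insert_congr_right hclN⟩

/-- If `I ∼ J`, then for all `x, y` there is an `xy`-augmenting path for `I` iff there is
one for `J`; moreover if `P` is an `xy`-augmenting path for `I` and `Q` is one for `J`,
then `I △ P ∼ J △ Q`. -/
theorem statement13 (M N : Matroid α) [M.Finitary] [N.Finitary] (hE : M.E = N.E)
    (I J : Set α) (hIfin : I.Finite) (hIM : M.Indep I) (hIN : N.Indep I)
    (hJfin : J.Finite) (hJM : M.Indep J) (hJN : N.Indep J) (hsim : Sim M N I J) :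
    (∀ x y, (∃ P, IsAugPath M N I P x y) ↔ ∃ Q, IsAugPath M N J Q x y) ∧
      ∀ x y P Q, IsAugPath M N I P x y → IsAugPath M N J Q x y →
        Sim M N (I ∆ P) (J ∆ Q) :=
  statement13_general M N hE I J hIfin hIM hIN hJfin hJM hJN hsim

end AZ
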